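/- Let Γ be a finite connected bipartite graph with edge set E and vertex set V = V_1 ⊔ V_2 (every edge joining a vertex of V_1 to a vertex of V_2), and let G be a group. For i = 1, 2, let the product ∏_{v∈V_i} G act on ∏_{e∈E} G by letting the factor indexed by v act on the factor indexed by e (on the left for V_1 and on the right for V_2) via multiplication whenever v is a vertex of e. Let m be the rank of H^1(Γ, ℤ) (the number of independent cycles of Γ). Then the double coset space ∏_{v∈V_1} G \ ∏_{e∈E} G / ∏_{v∈V_2} G is in bijection, as a pointed set, with G^m modulo uniform conjugacy. -/

import Mathlib

universe u

/-- The bipartite graph determined by a set `E` of edges with endpoint maps `v1 : E → V1`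
and `v2 : E → V2`: vertices `V1 ⊕ V2`, with `inl x` adjacent to `inr y` iff some edge `e`
has `v1 e = x` and `v2 e = y`. -/
def bipartiteGraph {V1 V2 E : Type u} (v1 : E → V1) (v2 : E → V2) :
    SimpleGraph (V1 ⊕ V2) where
  Adj v w := ∃ e, (v = .inl (v1 e) ∧ w = .inr (v2 e)) ∨ (w = .inl (v1 e) ∧ v = .inr (v2 e))
  symm := by constructor; intro v w ⟨e, h⟩; exact ⟨e, h.symm⟩
  loopless := by constructor; rintro v ⟨e, ⟨h1, h2⟩ | ⟨h1, h2⟩⟩ <;> rw [h1] at h2 <;> exact Sum.inl_ne_inr h2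

/-- Uniform conjugacy of `m`-tuples in a group `G`: `(g₁,…,g_m) ∼ (g₁',…,g_m')` iff there is
a single `h ∈ G` with `g_j' = h g_j h⁻¹` for all `j`. -/
def UniformConj (G : Type u) [Group G] (m : ℕ) (a b : Fin m → G) : Prop :=
  ∃ h : G, ∀ j, b j = h * a j * h⁻¹

/-!
Think of `x : E → G` as a `G`-connection on `Γ` and of the double coset relation as gauge
equivalence `x_e ↦ γ(v1 e) x_e γ(v2 e)⁻¹` with `γ : V1 ⊕ V2 → G`. Fix a rooted spanning tree.
Transporting along tree paths to the root gives a gauge transformation (the potential) making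
`x` trivial on every tree edge; what remains is the holonomy on the `|E| - |V| + 1` non-tree
edges. A gauge transformation preserving triviality on the tree is constant, equal to its
value at the root, so it acts on the holonomy by uniform conjugation. Conversely a tuple on the
non-tree edges, extended by `1` over the tree, is its own holonomy.
-/

theorem SimpleGraph.Connected.exists_adj_dist_lt {V : Type*} {Γ : SimpleGraph V}
    (hconn : Γ.Connected) {w r : V} (hw : w ≠ r) : ∃ u, Γ.Adj w u ∧ Γ.dist u r < Γ.dist w r := by
  obtain ⟨p, hp⟩ := hconn.exists_walk_length_eq_dist w r
  obtain ⟨u, hadj, q, rfl⟩ := p.exists_eq_cons_of_ne hw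
  rw [SimpleGraph.Walk.length_cons] at hp
  exact ⟨u, hadj, (SimpleGraph.dist_le q).trans_lt (by omega)⟩

namespace BipartiteGauge

def UniformConjOn (G : Type*) [Group G] (ι : Type*) (a b : ι → G) : Prop :=
  ∃ c : G, ∀ i, b i = c * a i * c⁻¹

def uniformConjOnCongr (G : Type*) [Group G] {ι κ : Type*} (σ : ι ≃ κ) :
    Quot (UniformConjOn G ι) ≃ Quot (UniformConjOn G κ) :=
  Quot.congr (σ.arrowCongr (.refl G)) fun _ _ =>
    ⟨fun ⟨c, hc⟩ => ⟨c, fun k => hc (σ.symm k)⟩,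
     fun ⟨c, hc⟩ => ⟨c, fun i => by simpa using hc (σ i)⟩⟩

theorem uniformConjOnCongr_one (G : Type*) [Group G] {ι κ : Type*} (σ : ι ≃ κ) :
    uniformConjOnCongr G σ (Quot.mk _ (1 : ι → G)) = Quot.mk _ 1 :=
  rfl

variable {V1 V2 E : Type u} {G : Type*} [Group G] (v1 : E → V1) (v2 : E → V2)

def IsEndpoint (e : E) (w : V1 ⊕ V2) : Prop := w = .inl (v1 e) ∨ w = .inr (v2 e)

def opposite (e : E) : V1 ⊕ V2 → V1 ⊕ V2
  | .inl _ => .inr (v2 e)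
  | .inr _ => .inl (v1 e)

theorem exists_isEndpoint_of_adj {w u : V1 ⊕ V2} (h : (bipartiteGraph v1 v2).Adj w u) :
    ∃ e, IsEndpoint v1 v2 e w ∧ u = opposite v1 v2 e w := by
  obtain ⟨e, ⟨rfl, rfl⟩ | ⟨rfl, rfl⟩⟩ := h
  exacts [⟨e, .inl rfl, rfl⟩, ⟨e, .inr rfl, rfl⟩]

theorem eq_opposite_of_isEndpoint {e : E} {w w' : V1 ⊕ V2} (hw : IsEndpoint v1 v2 e w)
    (hw' : IsEndpoint v1 v2 e w') (hne : w ≠ w') : w' = opposite v1 v2 e w := by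
  rcases hw with rfl | rfl <;> rcases hw' with rfl | rfl <;> first | rfl | exact absurd rfl hne

/-- A rooted spanning tree in parent-pointer form: `edge w` joins `w` to its parent
`opposite v1 v2 (edge w) w`, and `height` decreases towards the root. -/
structure SpanningTree where
  root : V1 ⊕ V2
  edge : ∀ w, w ≠ root → E
  height : V1 ⊕ V2 → ℕ
  isEndpoint_edge : ∀ w h, IsEndpoint v1 v2 (edge w h) w
  height_opposite_lt : ∀ w h, height (opposite v1 v2 (edge w h) w) < height w

theorem exists_spanningTree (hconn : (bipartiteGraph v1 v2).Connected) :
    Nonempty (SpanningTree v1 v2) := by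
  obtain ⟨r⟩ := hconn.nonempty
  have h_descend : ∀ w, w ≠ r → ∃ e, IsEndpoint v1 v2 e w ∧
      (bipartiteGraph v1 v2).dist (opposite v1 v2 e w) r < (bipartiteGraph v1 v2).dist w r := by
    intro w hw
    obtain ⟨u, hadj, hlt⟩ := hconn.exists_adj_dist_lt hw
    obtain ⟨e, he, rfl⟩ := exists_isEndpoint_of_adj v1 v2 hadj
    exact ⟨e, he, hlt⟩
  choose edge isEndpoint_edge height_lt using h_descend
  exact ⟨r, edge, fun w => (bipartiteGraph v1 v2).dist w r, isEndpoint_edge, height_lt⟩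

-- Edges are oriented from `V1` to `V2`; this is `x e` traversed starting at the endpoint `w`.
def orient (x : E → G) (e : E) : V1 ⊕ V2 → G
  | .inl _ => x e
  | .inr _ => (x e)⁻¹

theorem orient_eq_one_iff {x : E → G} {e : E} {w : V1 ⊕ V2} :
    orient x e w = 1 ↔ x e = 1 := by
  cases w <;> simp [orient]

-- The factor at `v ∈ V2` acts through `γ v⁻¹`, so that both products act by one `γ`.
def gauge (γ : V1 ⊕ V2 → G) (x : E → G) : E → G :=
  fun e => γ (.inl (v1 e)) * x e * (γ (.inr (v2 e)))⁻¹

theorem orient_gauge {γ : V1 ⊕ V2 → G} {x : E → G} {e : E} {w : V1 ⊕ V2}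
    (hw : IsEndpoint v1 v2 e w) :
    orient (gauge v1 v2 γ x) e w = γ w * orient x e w * (γ (opposite v1 v2 e w))⁻¹ := by
  rcases hw with rfl | rfl <;> simp [orient, gauge, opposite, mul_assoc]

theorem doubleCoset_setoid_iff {x y : E → G} :
    DoubleCoset.setoid
        (Set.range (MonoidHom.pi fun e => Pi.evalMonoidHom (fun _ : V1 => G) (v1 e)))
        (Set.range (MonoidHom.pi fun e => Pi.evalMonoidHom (fun _ : V2 => G) (v2 e))) x y ↔
      ∃ γ, y = gauge v1 v2 γ x := by
  rw [← MonoidHom.coe_range, ← MonoidHom.coe_range, DoubleCoset.rel_iff]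
  constructor
  · rintro ⟨_, ⟨f, rfl⟩, _, ⟨g, rfl⟩, rfl⟩
    refine ⟨Sum.elim f g⁻¹, funext fun e => ?_⟩
    change f (v1 e) * x e * g (v2 e) = f (v1 e) * x e * (g⁻¹ (v2 e))⁻¹
    rw [Pi.inv_apply, inv_inv]
  · rintro ⟨γ, rfl⟩
    exact ⟨_, ⟨γ ∘ .inl, rfl⟩, _, ⟨(γ ∘ .inr)⁻¹, rfl⟩, rfl⟩

namespace SpanningTree

variable {v1 v2} (T : SpanningTree v1 v2)

-- Transport of `x` along the tree path from `w` to the root.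
open Classical in
noncomputable def potential (x : E → G) (w : V1 ⊕ V2) : G :=
  if h : w = T.root then 1
  else orient x (T.edge w h) w * potential x (opposite v1 v2 (T.edge w h) w)
termination_by T.height w
decreasing_by exact T.height_opposite_lt w h

theorem potential_root (x : E → G) : T.potential x T.root = 1 := by
  rw [potential, dif_pos rfl]

theorem potential_of_ne (x : E → G) {w : V1 ⊕ V2} (h : w ≠ T.root) :
    T.potential x w =
      orient x (T.edge w h) w * T.potential x (opposite v1 v2 (T.edge w h) w) := by
  rw [potential, dif_neg h]

theorem eq_potential {x : E → G} {ψ : V1 ⊕ V2 → G} (h_root : ψ T.root = 1)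
    (h_step : ∀ w h, ψ w = orient x (T.edge w h) w * ψ (opposite v1 v2 (T.edge w h) w)) :
    ψ = T.potential x := by
  funext w
  induction w using (measure T.height).wf.induction with
  | _ w ih =>
    by_cases h : w = T.root
    · rw [h, h_root, potential_root]
    · rw [h_step w h, T.potential_of_ne x h, ih _ (T.height_opposite_lt w h)]

theorem potential_gauge (γ : V1 ⊕ V2 → G) (x : E → G) :
    T.potential (gauge v1 v2 γ x) = fun w => γ w * T.potential x w * (γ T.root)⁻¹ := by
  refine (T.eq_potential (by simp [potential_root]) fun w h => ?_).symm
  rw [orient_gauge v1 v2 (T.isEndpoint_edge w h), T.potential_of_ne x h]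
  group

theorem potential_eq_one {x : E → G} (hx : ∀ w h, x (T.edge w h) = 1) : T.potential x = 1 :=
  (T.eq_potential rfl fun w h => by simp [orient_eq_one_iff.mpr (hx w h)]).symm

noncomputable def holonomy (x : E → G) : E → G := gauge v1 v2 (T.potential x)⁻¹ x

theorem holonomy_edge (x : E → G) (w : V1 ⊕ V2) (h : w ≠ T.root) :
    T.holonomy x (T.edge w h) = 1 := by
  rw [← orient_eq_one_iff (w := w), holonomy, orient_gauge v1 v2 (T.isEndpoint_edge w h),
    Pi.inv_apply, Pi.inv_apply, T.potential_of_ne x h]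
  group

theorem holonomy_gauge (γ : V1 ⊕ V2 → G) (x : E → G) :
    T.holonomy (gauge v1 v2 γ x) = fun e => γ T.root * T.holonomy x e * (γ T.root)⁻¹ := by
  funext e
  simp only [holonomy, gauge, potential_gauge, Pi.inv_apply]
  group

theorem gauge_potential_holonomy (x : E → G) :
    gauge v1 v2 (T.potential x) (T.holonomy x) = x := by
  funext e
  simp only [holonomy, gauge, Pi.inv_apply]
  group

theorem holonomy_one : T.holonomy (1 : E → G) = 1 := by
  funext e
  simp [holonomy, T.potential_eq_one (x := (1 : E → G)) fun _ _ => rfl, gauge]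

theorem holonomy_eq_self {x : E → G} (hx : ∀ w h, x (T.edge w h) = 1) : T.holonomy x = x := by
  funext e
  simp [holonomy, gauge, T.potential_eq_one hx]

def treeEdges : Set E := Set.range fun w : {w // w ≠ T.root} => T.edge w w.2

theorem edge_injective :
    Function.Injective fun w : {w // w ≠ T.root} => T.edge w w.2 := by
  rintro ⟨w, hw⟩ ⟨w', hw'⟩ (he : T.edge w hw = T.edge w' hw')
  by_contra hne
  have hne : w ≠ w' := fun h => hne (Subtype.ext h)
  have hw_end : IsEndpoint v1 v2 (T.edge w hw) w' := he ▸ T.isEndpoint_edge w' hw'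
  have hw'_end : IsEndpoint v1 v2 (T.edge w' hw') w := he ▸ T.isEndpoint_edge w hw
  have h_lt := T.height_opposite_lt w hw
  have h_lt' := T.height_opposite_lt w' hw'
  rw [← eq_opposite_of_isEndpoint v1 v2 (T.isEndpoint_edge w hw) hw_end hne] at h_lt
  rw [← eq_opposite_of_isEndpoint v1 v2 (T.isEndpoint_edge w' hw') hw'_end hne.symm] at h_lt'
  omega

theorem ncard_treeEdges_compl [Finite V1] [Finite V2] [Finite E] :
    (T.treeEdges)ᶜ.ncard = Nat.card E + 1 - (Nat.card V1 + Nat.card V2) := by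
  have h_vertices : Nat.card {w // w ≠ T.root} = Nat.card (V1 ⊕ V2) - 1 := by
    rw [← Set.ncard_singleton T.root, ← Set.ncard_compl]
    rfl
  rw [Set.ncard_compl, treeEdges, Set.ncard_range_of_injective T.edge_injective, h_vertices,
    Nat.card_sum]
  have h_pos : 0 < Nat.card (V1 ⊕ V2) := Nat.card_pos_iff.mpr ⟨⟨T.root⟩, inferInstance⟩
  rw [Nat.card_sum] at h_pos
  omega

noncomputable def extendByOne (t : ↥(T.treeEdges)ᶜ → G) : E → G := Function.extend Subtype.val t 1

theorem extendByOne_apply (t : ↥(T.treeEdges)ᶜ → G) (e : ↥(T.treeEdges)ᶜ) :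
    T.extendByOne t e = t e :=
  Subtype.val_injective.extend_apply _ _ _

theorem extendByOne_edge (t : ↥(T.treeEdges)ᶜ → G) (w : V1 ⊕ V2) (h : w ≠ T.root) :
    T.extendByOne t (T.edge w h) = 1 :=
  Function.extend_apply' _ _ _ fun ⟨e, he⟩ => e.2 (he ▸ ⟨⟨w, h⟩, rfl⟩)

theorem extendByOne_eq {t : ↥(T.treeEdges)ᶜ → G} {y : E → G}
    (h_tree : ∀ w h, y (T.edge w h) = 1)
    (h_cotree : ∀ e : ↥(T.treeEdges)ᶜ, y e = t e) : T.extendByOne t = y := by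
  funext e
  by_cases he : e ∈ T.treeEdges
  · obtain ⟨⟨w, h⟩, rfl⟩ := he
    exact (T.extendByOne_edge t w h).trans (h_tree w h).symm
  · exact (T.extendByOne_apply t ⟨e, he⟩).trans (h_cotree ⟨e, he⟩).symm

noncomputable def holonomyEquiv :
    DoubleCoset.Quotient
        (Set.range (MonoidHom.pi fun e => Pi.evalMonoidHom (fun _ : V1 => G) (v1 e)))
        (Set.range (MonoidHom.pi fun e => Pi.evalMonoidHom (fun _ : V2 => G) (v2 e))) ≃
      Quot (UniformConjOn G ↥(T.treeEdges)ᶜ) where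
  toFun := Quotient.lift (fun x => Quot.mk _ fun e => T.holonomy x e) fun x y hxy => by
    obtain ⟨γ, rfl⟩ := (doubleCoset_setoid_iff v1 v2).mp hxy
    exact Quot.sound ⟨γ T.root, fun e => by rw [holonomy_gauge]⟩
  invFun := Quot.lift (fun t => Quotient.mk _ (T.extendByOne t)) fun t t' ⟨c, hc⟩ => by
    refine Quotient.sound ((doubleCoset_setoid_iff v1 v2).mpr
      ⟨fun _ => c, T.extendByOne_eq (fun w h => ?_) fun e => ?_⟩)
    · simp [gauge, extendByOne_edge]
    · simp [gauge, extendByOne_apply, hc e]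
  left_inv := Quotient.ind fun x => by
    refine Quotient.sound ((doubleCoset_setoid_iff v1 v2).mpr ⟨T.potential x, ?_⟩)
    rw [T.extendByOne_eq (T.holonomy_edge x) fun _ => rfl, gauge_potential_holonomy]
  right_inv := Quot.ind fun t => by
    refine congrArg _ (funext fun e => ?_)
    rw [T.holonomy_eq_self (T.extendByOne_edge t), extendByOne_apply]

theorem holonomyEquiv_one :
    T.holonomyEquiv (Quotient.mk (DoubleCoset.setoid _ _) 1) =
      Quot.mk _ (1 : ↥(T.treeEdges)ᶜ → G) := by
  change Quot.mk _ (fun e : ↥(T.treeEdges)ᶜ => T.holonomy (1 : E → G) e) = _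
  rw [holonomy_one]
  rfl

end SpanningTree

end BipartiteGauge

/-- Let `Γ` be a finite connected bipartite graph with edge set `E` and
vertex set `V = V₁ ⊔ V₂` (each edge `e` joining `v1 e ∈ V₁` to `v2 e ∈ V₂`), and let `G` be
a group.  Let `∏_{v∈V₁} G` act on `∏_{e∈E} G` on the left and `∏_{v∈V₂} G` on the right,
the factor indexed by a vertex `v` acting by multiplication on the factors indexed by edges
through `v`.  Let `m` be the rank of `H¹(Γ,ℤ)`, which for a finite connected (multi)graph
equals `|E| − |V| + 1`.  Then the double-coset space
`∏_{v∈V₁} G \\ ∏_{e∈E} G / ∏_{v∈V₂} G` is in bijection, as a pointed set, with `G^m`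
modulo uniform conjugacy. -/
theorem statement_14
    (V1 V2 E : Type u) [Finite V1] [Finite V2] [Finite E]
    (v1 : E → V1) (v2 : E → V2)
    (hconn : (bipartiteGraph v1 v2).Connected)
    (G : Type u) [Group G] :
    ∃ e : DoubleCoset.Quotient
        (Set.range (Pi.monoidHom fun e => Pi.evalMonoidHom (fun _ : V1 => G) (v1 e)))
        (Set.range (Pi.monoidHom fun e => Pi.evalMonoidHom (fun _ : V2 => G) (v2 e))) ≃
      Quot (UniformConj G (Nat.card E + 1 - (Nat.card V1 + Nat.card V2))),
      e (Quotient.mk (DoubleCoset.setoid _ _) 1) = Quot.mk _ 1 := by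
  obtain ⟨T⟩ := BipartiteGauge.exists_spanningTree v1 v2 hconn
  let σ := (Finite.equivFin ↥(T.treeEdges)ᶜ).trans (finCongr T.ncard_treeEdges_compl)
  refine ⟨T.holonomyEquiv.trans (BipartiteGauge.uniformConjOnCongr G σ :), ?_⟩
  exact (congrArg (BipartiteGauge.uniformConjOnCongr G σ) T.holonomyEquiv_one).trans
    (BipartiteGauge.uniformConjOnCongr_one G σ)
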